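/- arXiv:1007.3218 — 2 statements merged into one kernel-verified Lean document; each statement's English description precedes it below -/
import Mathlib

section
/- Let A be a C*-algebra, V a right A-module, X a nonempty set, and K : X × X → S_A(V) a positive-definite A-kernel. Then there exist a Hilbert C*-module M over A and a map D : X → Lin_A(V,M) such that (i) K(x,x')(v,v') = ⟨D(x)v | D(x')v'⟩ for all x,x' ∈ X and v,v' ∈ V, and (ii) the ℂ-linear span of ⋃_{x∈X} D(x)V is dense in M. -/
/-- An element of a *-ring is positive (in the algebraic sense) if it is a finite sum of
elements of the form `star a * a`; for a C*-algebra this coincides with the usual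
positivity in the C*-algebra, and likewise for the C*-algebra `M_n(A)` of matrices. -/
def AlgPos {A : Type} [NonUnitalNonAssocSemiring A] [Star A] (a : A) : Prop :=
  ∃ (k : ℕ) (f : Fin k → A), a = ∑ i, star (f i) * f i

/-- A ℂ-sesquilinear map `V × V → A`, conjugate-linear in the first argument and
linear in the second. -/
structure IsSesq {V A : Type} [AddCommGroup V] [Module ℂ V] [AddCommGroup A] [Module ℂ A]
    (s : V → V → A) : Prop where
  add_left : ∀ u v w, s (u + v) w = s u w + s v w
  add_right : ∀ u v w, s u (v + w) = s u v + s u w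
  smul_left : ∀ (c : ℂ) (v w : V), s (c • v) w = (starRingEnd ℂ) c • s v w
  smul_right : ∀ (c : ℂ) (v w : V), s v (c • w) = c • s v w

/-- A positive-definite kernel: all the matrices `(K (x i) (x j) (v i) (v j))_{i,j}`
are positive elements of `M_n(A)`. -/
def KernelPosDef {X V A : Type} [AddCommGroup V] [Module ℂ V]
    [NonUnitalNonAssocSemiring A] [Star A]
    (K : X → X → V → V → A) : Prop :=
  ∀ (n : ℕ) (x : Fin n → X) (v : Fin n → V),
    AlgPos (Matrix.of fun i j => K (x i) (x j) (v i) (v j))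

/-- A right module structure (over an algebra `A`) on a complex vector space. -/
structure IsRightModule (A : Type) {V : Type} [NonUnitalRing A] [Module ℂ A]
    [AddCommGroup V] [Module ℂ V] (sm : V → A → V) : Prop where
  add_sm : ∀ v w a, sm (v + w) a = sm v a + sm w a
  sm_add : ∀ v a b, sm v (a + b) = sm v a + sm v b
  sm_mul : ∀ v a b, sm v (a * b) = sm (sm v a) b
  smul_sm : ∀ (c : ℂ) v a, c • sm v a = sm (c • v) a
  sm_smul : ∀ (c : ℂ) v a, c • sm v a = sm v (c • a)

/-- An `A`-sesquilinear map on a right `A`-module `V`. -/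
structure IsASesq {A V : Type} [NonUnitalRing A] [Module ℂ A] [StarRing A]
    [AddCommGroup V] [Module ℂ V] (sm : V → A → V) (s : V → V → A) : Prop where
  sesq : IsSesq s
  sm_left : ∀ v v' a, s (sm v a) v' = star a * s v v'
  sm_right : ∀ v v' a, s v (sm v' a) = s v v' * a

variable (A : Type) [NonUnitalCStarAlgebra A] [PartialOrder A] [StarOrderedRing A]

/-- A bundled Hilbert C*-module over the C*-algebra `A`: a right `A`-module with an
`A`-valued inner product, complete in the norm `m ↦ ‖⟨m|m⟩‖^(1/2)` (completeness is
expressed via Cauchy sequences, with `‖⟨d|d⟩‖ < ε` equivalent to `‖⟨d|d⟩‖^(1/2) < ε^(1/2)`). -/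
structure HilbertCStarModule : Type 1 where
  M : Type
  [grp : AddCommGroup M]
  [modC : Module ℂ M]
  sm : M → A → M
  rightModule : IsRightModule A sm
  inner : M → M → A
  inner_nonneg : ∀ m, 0 ≤ inner m m
  inner_definite : ∀ m, inner m m = 0 → m = 0
  inner_add_right : ∀ m m' m'', inner m (m' + m'') = inner m m' + inner m m''
  inner_smul_right : ∀ (c : ℂ) m m', inner m (c • m') = c • inner m m'
  inner_sm_right : ∀ m m' a, inner m (sm m' a) = inner m m' * a
  inner_conj : ∀ m m', inner m m' = star (inner m' m)
  complete : ∀ u : ℕ → M,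
    (∀ ε : ℝ, 0 < ε → ∃ N, ∀ j ≥ N, ∀ k ≥ N, ‖inner (u j - u k) (u j - u k)‖ < ε) →
    ∃ m, ∀ ε : ℝ, 0 < ε → ∃ N, ∀ k ≥ N, ‖inner (u k - m) (u k - m)‖ < ε

attribute [instance] HilbertCStarModule.grp HilbertCStarModule.modC

variable {A}

/-- Density of a subset of a Hilbert C*-module with respect to the norm
`m ↦ ‖⟨m|m⟩‖^(1/2)`. -/
def DenseIn (H : HilbertCStarModule A) (S : Set H.M) : Prop :=
  ∀ m : H.M, ∀ ε : ℝ, 0 < ε → ∃ w ∈ S, ‖H.inner (m - w) (m - w)‖ < ε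

/-- `f : V → M` is ℂ-linear and `A`-linear, i.e. `f ∈ Lin_A(V,M)`. -/
structure IsLinAMap {V M : Type} [AddCommGroup V] [Module ℂ V] [AddCommGroup M] [Module ℂ M]
    (smV : V → A → V) (smM : M → A → M) (f : V → M) : Prop where
  map_add : ∀ v w, f (v + w) = f v + f w
  map_smul : ∀ (c : ℂ) v, f (c • v) = c • f v
  map_sm : ∀ v a, f (smV v a) = smM (f v) a

/-!
The finitely supported functions `X →₀ V` form a right `A`-module with the form
`⟨f, g⟩ = ∑ x, ∑ y, K x y (f x) (g y)`. Positive-definiteness of `K` says exactly that this form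
is positive, and `⟨δ_x v, δ_y w⟩ = K x y v w` on point masses, so `M` is the completion of
`X →₀ V` and `D x v` is the image of `δ_x v`.

To complete, the Cauchy–Schwarz inequality `‖⟨f, g⟩‖² ≤ ‖⟨f, f⟩‖ ‖⟨g, g⟩‖`, obtained from
`0 ≤ ⟨g - f·(t b), g - f·(t b)⟩` with `b = ⟨f, g⟩` and small `t > 0`, makes `‖⟨f, f⟩‖^(1/2)` a
seminorm for which the form and the right action are continuous. The uniform completion of a
seminormed space is Hausdorff, so the null space is divided out automatically, and the form and
the action extend to it by continuity.
-/

open UniformSpace Filter Topology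

namespace IsSesq

variable {R W : Type} [AddCommGroup R] [Module ℂ R] [AddCommGroup W] [Module ℂ W]
  {s : W → W → R}

def toAddMonoidHom₂ (hs : IsSesq s) : W →+ W →+ R :=
  AddMonoidHom.mk' (fun u => AddMonoidHom.mk' (s u) (hs.add_right u))
    fun u v => AddMonoidHom.ext (hs.add_left u v)

theorem zero_left (hs : IsSesq s) (w : W) : s 0 w = 0 :=
  (AddMonoidHom.mk' (s · w) (hs.add_left · · w)).map_zero

theorem zero_right (hs : IsSesq s) (w : W) : s w 0 = 0 :=
  (AddMonoidHom.mk' (s w) (hs.add_right w)).map_zero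

theorem sub_left (hs : IsSesq s) (u v w : W) : s (u - v) w = s u w - s v w :=
  (AddMonoidHom.mk' (s · w) (hs.add_left · · w)).map_sub u v

theorem sub_right (hs : IsSesq s) (u v w : W) : s u (v - w) = s u v - s u w :=
  (AddMonoidHom.mk' (s u) (hs.add_right u)).map_sub v w

theorem neg_neg_apply (hs : IsSesq s) (u v : W) : s (-u) (-v) = s u v := by
  rw [← neg_one_smul ℂ u, ← neg_one_smul ℂ v, hs.smul_left, hs.smul_right, smul_smul]
  simp

end IsSesq

theorem IsSesq.sqrt_norm_smul_self {R W : Type} [SeminormedAddCommGroup R] [NormedSpace ℂ R]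
    [AddCommGroup W] [Module ℂ W] {B : W → W → R} (hB : IsSesq B) (c : ℂ) (f : W) :
    √‖B (c • f) (c • f)‖ = ‖c‖ * √‖B f f‖ := by
  rw [hB.smul_left, hB.smul_right, smul_smul, norm_smul, norm_mul, Complex.norm_conj,
    Real.sqrt_mul (by positivity), Real.sqrt_mul_self (norm_nonneg c)]

namespace IsRightModule

variable {R W : Type} [NonUnitalRing R] [Module ℂ R] [AddCommGroup W] [Module ℂ W]
  {sm : W → R → W}

theorem zero_sm (h : IsRightModule R sm) (a : R) : sm 0 a = 0 :=
  (AddMonoidHom.mk' (sm · a) (h.add_sm · · a)).map_zero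

theorem sub_sm (h : IsRightModule R sm) (u v : W) (a : R) : sm (u - v) a = sm u a - sm v a :=
  (AddMonoidHom.mk' (sm · a) (h.add_sm · · a)).map_sub u v

end IsRightModule

theorem AlgPos.sum_sum_nonneg {R n : Type} [NonUnitalSemiring R] [PartialOrder R] [StarRing R]
    [StarOrderedRing R] [Fintype n] {M : Matrix n n R} (hM : AlgPos M) :
    0 ≤ ∑ i, ∑ j, M i j := by
  obtain ⟨k, C, rfl⟩ := hM
  have entries (C : Matrix n n R) :
      ∑ i, ∑ j, (star C * C) i j = ∑ l, star (∑ i, C l i) * ∑ j, C l j := by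
    simp only [Matrix.mul_apply, Matrix.star_apply, star_sum, Finset.sum_mul_sum]
    exact (Finset.sum_congr rfl fun i _ => Finset.sum_comm).trans Finset.sum_comm
  simp only [Matrix.sum_apply]
  rw [(Finset.sum_congr rfl fun i _ => Finset.sum_comm).trans Finset.sum_comm]
  refine Finset.sum_nonneg fun t _ => ?_
  rw [entries]
  exact Finset.sum_nonneg fun l _ => star_mul_self_nonneg _

namespace KernelPosDef

variable {X V : Type} [AddCommGroup V] [Module ℂ V]

theorem star_apply {R : Type} [NonUnitalNonAssocSemiring R] [StarRing R]
    {K : X → X → V → V → R} (hK : KernelPosDef K) (x y : X) (v w : V) :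
    star (K x y v w) = K y x w v := by
  obtain ⟨k, C, hC⟩ := hK 2 ![x, y] ![v, w]
  have h01 := congrFun₂ hC 0 1
  have h10 := congrFun₂ hC 1 0
  simp only [Matrix.of_apply, Matrix.cons_val_zero, Matrix.cons_val_one] at h01 h10
  rw [h01, h10]
  simp only [Matrix.sum_apply, Matrix.mul_apply, Matrix.star_apply, star_sum, star_mul, star_star]

theorem sum_sum_nonneg {R : Type} [NonUnitalSemiring R] [PartialOrder R] [StarRing R]
    [StarOrderedRing R] {K : X → X → V → V → R} (hK : KernelPosDef K)
    {ι : Type} [Fintype ι] (x : ι → X) (v : ι → V) :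
    0 ≤ ∑ i, ∑ j, K (x i) (x j) (v i) (v j) := by
  let e := (Fintype.equivFin ι).symm
  calc 0 ≤ ∑ i, ∑ j, K (x (e i)) (x (e j)) (v (e i)) (v (e j)) :=
        (hK _ (x ∘ e) (v ∘ e)).sum_sum_nonneg
    _ = _ := Fintype.sum_equiv e _ _ fun i =>
      Fintype.sum_equiv e _ (fun j => K (x (e i)) (x j) (v (e i)) (v j)) fun j => rfl

end KernelPosDef

structure IsSemiInnerProduct {R W : Type} [NonUnitalRing R] [Module ℂ R] [StarRing R]
    [PartialOrder R] [AddCommGroup W] [Module ℂ W] (smW : W → R → W) (B : W → W → R) :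
    Prop where
  rightModule : IsRightModule R smW
  aSesq : IsASesq smW B
  star_apply : ∀ f g, star (B f g) = B g f
  nonneg : ∀ f, 0 ≤ B f f

section KernelForm

variable {R X V : Type} [AddCommGroup V] [Module ℂ V]

def kernelForm [AddCommMonoid R] (K : X → X → V → V → R) (f g : X →₀ V) : R :=
  f.sum fun x v => g.sum fun y w => K x y v w

noncomputable def finsuppAction [NonUnitalRing R] [Module ℂ R] (smV : V → R → V)
    (hV : IsRightModule R smV) (f : X →₀ V) (a : R) : X →₀ V :=
  f.mapRange (smV · a) (hV.zero_sm a)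

theorem isSesq_kernelForm [AddCommGroup R] [Module ℂ R] {K : X → X → V → V → R}
    (hK : ∀ x y, IsSesq (K x y)) : IsSesq (kernelForm K) where
  add_left f f' g := Finsupp.sum_add_index' (fun x => by simp [(hK _ _).zero_left])
    fun x v v' => by simp only [(hK _ _).add_left, Finsupp.sum_add]
  add_right f g g' := by
    simp only [kernelForm, ← Finsupp.sum_add]
    exact Finsupp.sum_congr fun x _ => Finsupp.sum_add_index' (fun y => (hK _ _).zero_right _)
      fun y => (hK _ _).add_right _
  smul_left c f g := by
    simp only [kernelForm, Finsupp.smul_sum]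
    rw [Finsupp.sum_smul_index' fun x => by simp [(hK _ _).zero_left]]
    simp only [(hK _ _).smul_left]
  smul_right c f g := by
    simp only [kernelForm, Finsupp.smul_sum]
    refine Finsupp.sum_congr fun x _ => ?_
    rw [Finsupp.sum_smul_index' fun y => (hK _ _).zero_right _]
    simp only [(hK _ _).smul_right]

theorem kernelForm_single_single [AddCommGroup R] [Module ℂ R] {K : X → X → V → V → R}
    (hK : ∀ x y, IsSesq (K x y)) (x y : X) (v w : V) :
    kernelForm K (Finsupp.single x v) (Finsupp.single y w) = K x y v w := by
  simp [kernelForm, (hK _ _).zero_left, (hK _ _).zero_right]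

theorem star_kernelForm [NonUnitalNonAssocSemiring R] [StarRing R] {K : X → X → V → V → R}
    (hpos : KernelPosDef K) (f g : X →₀ V) : star (kernelForm K f g) = kernelForm K g f := by
  simp only [kernelForm, Finsupp.sum, star_sum, hpos.star_apply]
  exact Finset.sum_comm

theorem kernelForm_self_nonneg [NonUnitalSemiring R] [PartialOrder R] [StarRing R]
    [StarOrderedRing R] {K : X → X → V → V → R} (hpos : KernelPosDef K) (f : X →₀ V) :
    0 ≤ kernelForm K f f := by
  simp only [kernelForm, Finsupp.sum, ← Finset.sum_coe_sort f.support]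
  exact hpos.sum_sum_nonneg (fun x : f.support => (x : X)) fun x => f x

variable [NonUnitalRing R] [Module ℂ R] {smV : V → R → V}

theorem finsuppAction_apply (hV : IsRightModule R smV) (f : X →₀ V) (a : R) (x : X) :
    finsuppAction smV hV f a x = smV (f x) a :=
  Finsupp.mapRange_apply

theorem finsuppAction_single (hV : IsRightModule R smV) (x : X) (v : V) (a : R) :
    finsuppAction smV hV (Finsupp.single x v) a = Finsupp.single x (smV v a) :=
  Finsupp.mapRange_single

theorem isRightModule_finsuppAction (hV : IsRightModule R smV) :
    IsRightModule R (finsuppAction (X := X) smV hV) where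
  add_sm f g a := by ext; simp [finsuppAction_apply, hV.add_sm]
  sm_add f a b := by ext; simp [finsuppAction_apply, hV.sm_add]
  sm_mul f a b := by ext; simp [finsuppAction_apply, hV.sm_mul]
  smul_sm c f a := by ext; simp [finsuppAction_apply, hV.smul_sm]
  sm_smul c f a := by ext; simp [finsuppAction_apply, hV.sm_smul]

theorem isASesq_kernelForm [StarRing R] {K : X → X → V → V → R} (hV : IsRightModule R smV)
    (hK : ∀ x y, IsASesq smV (K x y)) :
    IsASesq (finsuppAction (X := X) smV hV) (kernelForm K) where
  sesq := isSesq_kernelForm fun x y => (hK x y).sesq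
  sm_left f g a := by
    rw [kernelForm, finsuppAction, Finsupp.sum_mapRange_index
      fun x => by simp [(hK _ _).sesq.zero_left]]
    simp only [(hK _ _).sm_left, kernelForm, Finsupp.sum, Finset.mul_sum]
  sm_right f g a := by
    have zero_right (x y : X) (v : V) : K x y v 0 = 0 := (hK x y).sesq.zero_right v
    simp only [kernelForm, finsuppAction, Finsupp.sum_mapRange_index, zero_right, implies_true]
    simp only [(hK _ _).sm_right, Finsupp.sum, Finset.sum_mul]

theorem isSemiInnerProduct_kernelForm [StarRing R] [PartialOrder R] [StarOrderedRing R]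
    {K : X → X → V → V → R} (hV : IsRightModule R smV) (hK : ∀ x y, IsASesq smV (K x y))
    (hpos : KernelPosDef K) :
    IsSemiInnerProduct (finsuppAction (X := X) smV hV) (kernelForm K) where
  rightModule := isRightModule_finsuppAction hV
  aSesq := isASesq_kernelForm hV hK
  star_apply := star_kernelForm hpos
  nonneg := kernelForm_self_nonneg hpos

end KernelForm

theorem IsASesq.apply_sub_sm_self {R W : Type} [NonUnitalRing R] [Module ℂ R] [StarRing R]
    [AddCommGroup W] [Module ℂ W] {smW : W → R → W} {B : W → W → R} (hB : IsASesq smW B)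
    (f g : W) (a : R) :
    B (g - smW f a) (g - smW f a)
      = B g g - B g f * a - star a * B f g + star a * B f f * a := by
  rw [hB.sesq.sub_left, hB.sesq.sub_right, hB.sesq.sub_right, hB.sm_left, hB.sm_left,
    hB.sm_right, hB.sm_right, mul_assoc]
  abel

namespace IsSemiInnerProduct

variable {W : Type} [AddCommGroup W] [Module ℂ W] {smW : W → A → W} {B : W → W → A}

theorem smul_star_mul_self_le (hB : IsSemiInnerProduct smW B) (f g : W) {t : ℝ} (ht : 0 < t)
    (htc : t * ‖B f f‖ ≤ 1) : t • (star (B f g) * B f g) ≤ B g g := by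
  set b := B f g
  set p := star b * b
  have hp : 0 ≤ p := star_mul_self_nonneg b
  have expand : B (g - smW f (t • b)) (g - smW f (t • b))
      = B g g - (2 * t) • p + (t * t) • (star b * B f f * b) := by
    rw [hB.aSesq.apply_sub_sm_self, ← hB.star_apply f g, star_smul, star_trivial t]
    simp only [smul_mul_assoc, mul_smul_comm, smul_smul, p, b]
    rw [two_mul, add_smul]
    abel
  have conj_le : (t * t) • (star b * B f f * b) ≤ (t * t * ‖B f f‖) • p := by
    rw [mul_smul _ ‖B f f‖]
    exact smul_le_smul_of_nonneg_left
      (CStarAlgebra.star_left_conjugate_le_norm_smul (hB.star_apply f f)) (by positivity)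
  have small : (t * t * ‖B f f‖) • p ≤ t • p :=
    smul_le_smul_of_nonneg_right (by nlinarith) hp
  have nonneg : (0 : A) ≤ B g g - t • p := calc
    (0 : A) ≤ B (g - smW f (t • b)) (g - smW f (t • b)) := hB.nonneg _
    _ = B g g - (2 * t) • p + (t * t) • (star b * B f f * b) := expand
    _ ≤ B g g - (2 * t) • p + t • p := add_le_add_right (conj_le.trans small) _
    _ = B g g - t • p := by rw [two_mul, add_smul]; abel
  exact sub_nonneg.mp nonneg

theorem norm_apply_sq_le (hB : IsSemiInnerProduct smW B) (f g : W) :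
    ‖B f g‖ ^ 2 ≤ ‖B f f‖ * ‖B g g‖ := by
  have bound : ∀ s > ‖B f f‖, ‖B f g‖ ^ 2 ≤ s * ‖B g g‖ := by
    intro s hs
    have hs0 : 0 < s := (norm_nonneg _).trans_lt hs
    have h := CStarAlgebra.norm_le_norm_of_nonneg_of_le
      (smul_nonneg (inv_nonneg.mpr hs0.le) (star_mul_self_nonneg _))
      (hB.smul_star_mul_self_le f g (inv_pos.mpr hs0)
        (by rw [inv_mul_le_iff₀ hs0, mul_one]; exact hs.le))
    rw [norm_smul, CStarRing.norm_star_mul_self, Real.norm_of_nonneg (inv_nonneg.mpr hs0.le),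
      inv_mul_le_iff₀ hs0] at h
    rwa [sq]
  exact ge_of_tendsto (x := 𝓝[>] ‖B f f‖)
    (((continuous_mul_const _).tendsto _).mono_left nhdsWithin_le_nhds)
    (eventually_nhdsWithin_of_forall bound)

theorem norm_apply_le_sqrt_mul_sqrt (hB : IsSemiInnerProduct smW B) (f g : W) :
    ‖B f g‖ ≤ √‖B f f‖ * √‖B g g‖ := by
  rw [← Real.sqrt_mul (norm_nonneg _), Real.le_sqrt (norm_nonneg _) (by positivity)]
  exact hB.norm_apply_sq_le f g

noncomputable def seminorm (hB : IsSemiInnerProduct smW B) : AddGroupSeminorm W where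
  toFun w := √‖B w w‖
  map_zero' := by simp [hB.aSesq.sesq.zero_left]
  add_le' f g := by
    have hs := hB.aSesq.sesq
    have hfg := hB.norm_apply_le_sqrt_mul_sqrt f g
    have hgf := hB.norm_apply_le_sqrt_mul_sqrt g f
    have hf := Real.sq_sqrt (norm_nonneg (B f f))
    have hg := Real.sq_sqrt (norm_nonneg (B g g))
    rw [Real.sqrt_le_left (by positivity)]
    calc ‖B (f + g) (f + g)‖ = ‖B f f + (B f g + B g f) + B g g‖ := by
          rw [hs.add_left, hs.add_right, hs.add_right]; abel_nf
      _ ≤ ‖B f f‖ + (‖B f g‖ + ‖B g f‖) + ‖B g g‖ :=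
          norm_add₃_le.trans (by gcongr; exact norm_add_le _ _)
      _ ≤ (√‖B f f‖ + √‖B g g‖) ^ 2 := by nlinarith
  neg' f := by simp only [hB.aSesq.sesq.neg_neg_apply]

end IsSemiInnerProduct

theorem IsSesq.continuous_uncurry {R W : Type} [SeminormedAddCommGroup R] [NormedSpace ℂ R]
    [SeminormedAddCommGroup W] [NormedSpace ℂ W] {B : W → W → R} (hB : IsSesq B)
    (hbound : ∀ f g, ‖B f g‖ ≤ ‖f‖ * ‖g‖) : Continuous (Function.uncurry B) :=
  IsBoundedBilinearMap.continuous (𝕜 := ℝ)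
    { add_left := hB.add_left
      smul_left := fun t f g => by
        simp only [Function.uncurry_apply_pair]
        rw [← Complex.coe_smul, hB.smul_left, Complex.conj_ofReal, Complex.coe_smul]
      add_right := hB.add_right
      smul_right := fun t f g => by
        simp only [Function.uncurry_apply_pair]
        rw [← Complex.coe_smul, hB.smul_right, Complex.coe_smul]
      bound := ⟨1, one_pos, fun f g => by simpa using hbound f g⟩ }

section Completion

variable {W : Type}

noncomputable def completionForm [UniformSpace W] {R : Type} [TopologicalSpace R]
    (B : W → W → R) : Completion W → Completion W → R :=
  Function.curry
    ((Completion.isDenseInducing_coe.prodMap Completion.isDenseInducing_coe).extend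
      (Function.uncurry B))

theorem completionForm_coe [UniformSpace W] {R : Type} [TopologicalSpace R] [T2Space R]
    {B : W → W → R} (hB : Continuous (Function.uncurry B)) (v w : W) :
    completionForm B v w = B v w :=
  (Completion.isDenseInducing_coe.prodMap Completion.isDenseInducing_coe).extend_eq hB (v, w)

theorem continuous_completionForm [SeminormedAddCommGroup W] [NormedSpace ℂ W] {R : Type}
    [NormedAddCommGroup R] [NormedSpace ℂ R] [CompleteSpace R] {B : W → W → R} (hs : IsSesq B)
    (hB : Continuous (Function.uncurry B)) :
    Continuous (Function.uncurry (completionForm B)) := by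
  rw [completionForm, Function.uncurry_curry]
  exact (Completion.isDenseInducing_toCompl W).extend_Z_bilin
    (Completion.isDenseInducing_toCompl W) (φ := hs.toAddMonoidHom₂) hB

variable [SeminormedAddCommGroup W] [NormedSpace ℂ W]

theorem IsRightModule.completion {R : Type} [NonUnitalRing R] [Module ℂ R] {sm : W → R → W}
    (h : IsRightModule R sm) (hsm : ∀ a, UniformContinuous (sm · a)) :
    IsRightModule R fun (m : Completion W) a => Completion.map (sm · a) m := by
  have map_coe (a : R) (w : W) : Completion.map (sm · a) (w : Completion W) = sm w a :=
    Completion.map_coe (hsm a) w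
  have cont (a : R) : Continuous (Completion.map (sm · a)) := Completion.continuous_map
  refine ⟨fun m n a => ?_, fun m a b => ?_, fun m a b => ?_, fun c m a => ?_, fun c m a => ?_⟩
  · induction m, n using Completion.induction_on₂ with
    | hp => exact isClosed_eq (by fun_prop) (by fun_prop)
    | ih v w => simp only [← Completion.coe_add, map_coe, h.add_sm]
  · induction m using Completion.induction_on with
    | hp => exact isClosed_eq (cont _) ((cont a).add (cont b))
    | ih v => rw [map_coe, map_coe, map_coe, ← Completion.coe_add, h.sm_add]
  · induction m using Completion.induction_on with
    | hp => exact isClosed_eq (cont _) ((cont b).comp (cont a))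
    | ih v => rw [map_coe, map_coe, map_coe, h.sm_mul]
  · induction m using Completion.induction_on with
    | hp => exact isClosed_eq ((cont a).const_smul c) ((cont a).comp (continuous_const_smul c))
    | ih v => rw [map_coe, ← Completion.coe_smul, ← Completion.coe_smul, map_coe, h.smul_sm]
  · induction m using Completion.induction_on with
    | hp => exact isClosed_eq ((cont a).const_smul c) (cont _)
    | ih v => rw [map_coe, map_coe, ← Completion.coe_smul, h.sm_smul]

end Completion

section NormedASesq

variable {R W : Type} [NonUnitalNormedRing R] [NormedSpace ℂ R] [StarRing R] [NormedStarGroup R]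
  [SeminormedAddCommGroup W] [NormedSpace ℂ W] {smW : W → R → W} {B : W → W → R}

theorem IsASesq.norm_sm_le (hB : IsASesq smW B) (hnorm : ∀ w, ‖B w w‖ = ‖w‖ ^ 2) (w : W)
    (a : R) : ‖smW w a‖ ≤ ‖w‖ * ‖a‖ := by
  refine (pow_le_pow_iff_left₀ (norm_nonneg _) (by positivity) two_ne_zero).mp ?_
  calc ‖smW w a‖ ^ 2 = ‖star a * B w w * a‖ := by
        rw [← hnorm, hB.sm_left, hB.sm_right, mul_assoc]
    _ ≤ ‖star a‖ * ‖B w w‖ * ‖a‖ := norm_mul₃_le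
    _ = (‖w‖ * ‖a‖) ^ 2 := by rw [norm_star, hnorm]; ring

theorem IsASesq.uniformContinuous_sm (hW : IsRightModule R smW) (hB : IsASesq smW B)
    (hnorm : ∀ w, ‖B w w‖ = ‖w‖ ^ 2) (a : R) : UniformContinuous (smW · a) :=
  (LipschitzWith.of_dist_le_mul fun v w => by
    rw [dist_eq_norm, dist_eq_norm, ← hW.sub_sm, coe_nnnorm a, mul_comm]
    exact hB.norm_sm_le hnorm _ a).uniformContinuous

end NormedASesq

namespace IsSemiInnerProduct

section Completion

variable {W : Type} [SeminormedAddCommGroup W] [NormedSpace ℂ W] {smW : W → A → W}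
  {B : W → W → A} (hB : IsSemiInnerProduct smW B) (hnorm : ∀ w, ‖B w w‖ = ‖w‖ ^ 2)
include hB hnorm

theorem norm_apply_le (f g : W) : ‖B f g‖ ≤ ‖f‖ * ‖g‖ := by
  simpa only [hnorm, Real.sqrt_sq (norm_nonneg _)] using hB.norm_apply_le_sqrt_mul_sqrt f g

theorem continuous_uncurry : Continuous (Function.uncurry B) :=
  hB.aSesq.sesq.continuous_uncurry (hB.norm_apply_le hnorm)

theorem norm_completionForm_self (m : Completion W) :
    ‖completionForm B m m‖ = ‖m‖ ^ 2 := by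
  have hc := continuous_completionForm hB.aSesq.sesq (hB.continuous_uncurry hnorm)
  induction m using Completion.induction_on with
  | hp => exact isClosed_eq (hc.comp (continuous_id.prodMk continuous_id)).norm (by fun_prop)
  | ih w => rw [completionForm_coe (hB.continuous_uncurry hnorm), hnorm, Completion.norm_coe]

theorem norm_completionForm_self_lt_iff (m : Completion W) (ε : ℝ) :
    ‖completionForm B m m‖ < ε ↔ ‖m‖ < √ε := by
  rw [hB.norm_completionForm_self hnorm, Real.lt_sqrt (norm_nonneg _)]

theorem completionForm_complete (u : ℕ → Completion W)
    (hu : ∀ ε : ℝ, 0 < ε → ∃ N, ∀ j ≥ N, ∀ k ≥ N,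
      ‖completionForm B (u j - u k) (u j - u k)‖ < ε) :
    ∃ m, ∀ ε : ℝ, 0 < ε → ∃ N, ∀ k ≥ N, ‖completionForm B (u k - m) (u k - m)‖ < ε := by
  simp only [hB.norm_completionForm_self_lt_iff hnorm] at hu ⊢
  have hcauchy : CauchySeq u := Metric.cauchySeq_iff.mpr fun ε hε => by
    simpa only [dist_eq_norm, Real.sqrt_sq hε.le] using hu (ε ^ 2) (pow_pos hε 2)
  obtain ⟨m, hm⟩ := cauchySeq_tendsto_of_complete hcauchy
  refine ⟨m, fun ε hε => ?_⟩
  simpa only [dist_eq_norm] using Metric.tendsto_atTop.mp hm (√ε) (Real.sqrt_pos.mpr hε)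

noncomputable def completionModule : HilbertCStarModule A :=
  have hcoe := completionForm_coe (hB.continuous_uncurry hnorm)
  have hc := continuous_completionForm hB.aSesq.sesq (hB.continuous_uncurry hnorm)
  have hs := hB.aSesq.sesq
  have hsm := hB.aSesq.uniformContinuous_sm hB.rightModule hnorm
  have hc' {α : Type} [TopologicalSpace α] {f g : α → Completion W} (hf : Continuous f)
      (hg : Continuous g) : Continuous fun x => completionForm B (f x) (g x) :=
    hc.comp (hf.prodMk hg)
  { M := Completion W
    sm m a := Completion.map (smW · a) m
    rightModule := hB.rightModule.completion hsm
    inner := completionForm B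
    inner_nonneg m := by
      induction m using Completion.induction_on with
      | hp => exact isClosed_Ici.preimage (hc.comp (continuous_id.prodMk continuous_id))
      | ih w => rw [hcoe]; exact hB.nonneg w
    inner_definite m h := by
      have := hB.norm_completionForm_self hnorm m
      rw [h, norm_zero, eq_comm, pow_eq_zero_iff two_ne_zero] at this
      exact norm_eq_zero.mp this
    inner_add_right m n k := by
      induction m, n, k using Completion.induction_on₃ with
      | hp =>
        exact isClosed_eq (hc' continuous_fst (continuous_snd.fst.add continuous_snd.snd))
          ((hc' continuous_fst continuous_snd.fst).add (hc' continuous_fst continuous_snd.snd))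
      | ih u v w => rw [← Completion.coe_add, hcoe, hcoe, hcoe, hs.add_right]
    inner_smul_right c m n := by
      induction m, n using Completion.induction_on₂ with
      | hp =>
        exact isClosed_eq (hc' continuous_fst (continuous_snd.const_smul c)) (hc.const_smul c)
      | ih u v => rw [← Completion.coe_smul, hcoe, hcoe, hs.smul_right]
    inner_sm_right m n a := by
      induction m, n using Completion.induction_on₂ with
      | hp =>
        exact isClosed_eq (hc' continuous_fst (Completion.continuous_map.comp continuous_snd))
          (hc.mul continuous_const)
      | ih u v =>
        rw [Completion.map_coe (hsm a), hcoe, hcoe, hB.aSesq.sm_right]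
    inner_conj m n := by
      induction m, n using Completion.induction_on₂ with
      | hp => exact isClosed_eq hc (hc.comp continuous_swap).star
      | ih u v => rw [hcoe, hcoe, hB.star_apply]
    complete := hB.completionForm_complete hnorm }

theorem exists_isLinAMap_denseIn_range :
    ∃ (H : HilbertCStarModule A) (ι : W → H.M), IsLinAMap smW H.sm ι ∧
      (∀ v w, B v w = H.inner (ι v) (ι w)) ∧ DenseIn H (Set.range ι) := by
  have hsm := hB.aSesq.uniformContinuous_sm hB.rightModule hnorm
  refine ⟨hB.completionModule hnorm, fun w => (w : Completion W),
    ⟨Completion.coe_add, Completion.coe_smul,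
    fun v a => (Completion.map_coe (hsm a) v).symm⟩,
    fun v w => (completionForm_coe (hB.continuous_uncurry hnorm) v w).symm, fun m ε hε => ?_⟩
  obtain ⟨w, hw⟩ := Metric.denseRange_iff.mp Completion.denseRange_coe
    (show Completion W from m) (√ε) (Real.sqrt_pos.mpr hε)
  rw [dist_eq_norm, ← hB.norm_completionForm_self_lt_iff hnorm] at hw
  exact ⟨_, Set.mem_range_self w, hw⟩

end Completion

theorem exists_hilbertCStarModule {W : Type} [AddCommGroup W] [Module ℂ W] {smW : W → A → W}
    {B : W → W → A} (hB : IsSemiInnerProduct smW B) :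
    ∃ (H : HilbertCStarModule A) (ι : W → H.M), IsLinAMap smW H.sm ι ∧
      (∀ v w, B v w = H.inner (ι v) (ι w)) ∧ DenseIn H (Set.range ι) :=
  letI : SeminormedAddCommGroup W := hB.seminorm.toSeminormedAddCommGroup
  letI : NormedSpace ℂ W := ⟨fun c f => (hB.aSesq.sesq.sqrt_norm_smul_self c f).le⟩
  hB.exists_isLinAMap_denseIn_range fun _ => (Real.sq_sqrt (norm_nonneg _)).symm

end IsSemiInnerProduct

theorem IsLinAMap.map_zero {R V M : Type} [AddCommGroup V] [Module ℂ V] [AddCommGroup M]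
    [Module ℂ M] {smV : V → R → V} {smM : M → R → M} {f : V → M} (hf : IsLinAMap smV smM f) :
    f 0 = 0 := by
  simpa using hf.map_smul 0 0

section Single

variable {R X V M : Type} [NonUnitalRing R] [Module ℂ R] [AddCommGroup V] [Module ℂ V]
  [AddCommGroup M] [Module ℂ M] {smV : V → R → V} {hV : IsRightModule R smV}
  {smM : M → R → M} {ι : (X →₀ V) → M}

theorem IsLinAMap.comp_single (hι : IsLinAMap (finsuppAction smV hV) smM ι) (x : X) :
    IsLinAMap smV smM fun v => ι (Finsupp.single x v) where
  map_add v w := by rw [Finsupp.single_add, hι.map_add]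
  map_smul c v := by rw [← Finsupp.smul_single, hι.map_smul]
  map_sm v a := by rw [← finsuppAction_single hV, hι.map_sm]

theorem IsLinAMap.range_subset_span_single (hι : IsLinAMap (finsuppAction smV hV) smM ι) :
    Set.range ι ⊆ Submodule.span ℂ (⋃ x, Set.range fun v => ι (Finsupp.single x v)) := by
  rintro _ ⟨f, rfl⟩
  induction f using Finsupp.induction_linear with
  | zero => rw [hι.map_zero]; exact zero_mem _
  | add f g hf hg => rw [hι.map_add]; exact add_mem hf hg
  | single x v => exact Submodule.subset_span (Set.mem_iUnion.mpr ⟨x, v, rfl⟩)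

end Single

theorem DenseIn.mono {R : Type} [NonUnitalCStarAlgebra R] [PartialOrder R]
    {H : HilbertCStarModule R} {S T : Set H.M} (hST : S ⊆ T) (hS : DenseIn H S) :
    DenseIn H T := fun m ε hε =>
  let ⟨w, hw, hlt⟩ := hS m ε hε
  ⟨w, hST hw, hlt⟩

theorem statement1_general (V X : Type) [AddCommGroup V] [Module ℂ V]
    (smV : V → A → V) (hV : IsRightModule A smV)
    (K : X → X → V → V → A) (hsesq : ∀ x x', IsASesq smV (K x x'))
    (hpos : KernelPosDef K) :
    ∃ (H : HilbertCStarModule A) (D : X → V → H.M),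
      (∀ x, IsLinAMap smV H.sm (D x)) ∧
      (∀ x x' v v', K x x' v v' = H.inner (D x v) (D x' v')) ∧
      DenseIn H (Submodule.span ℂ (⋃ x : X, Set.range (D x)) : Submodule ℂ H.M) := by
  obtain ⟨H, ι, hι, hinner, hdense⟩ :=
    (isSemiInnerProduct_kernelForm (X := X) hV hsesq hpos).exists_hilbertCStarModule
  refine ⟨H, fun x v => ι (Finsupp.single x v), hι.comp_single, fun x x' v v' => ?_,
    hdense.mono hι.range_subset_span_single⟩
  rw [← hinner, kernelForm_single_single fun x y => (hsesq x y).sesq]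

/-- Existence of a minimal Kolmogorov decomposition for a positive-definite `A`-kernel
with values in the `A`-sesquilinear maps on a right `A`-module `V`. -/
theorem statement1 (V X : Type) [AddCommGroup V] [Module ℂ V] [Nonempty X]
    (smV : V → A → V) (hV : IsRightModule A smV)
    (K : X → X → V → V → A) (hsesq : ∀ x x', IsASesq smV (K x x'))
    (hpos : KernelPosDef K) :
    ∃ (H : HilbertCStarModule A) (D : X → V → H.M),
      (∀ x, IsLinAMap smV H.sm (D x)) ∧
      (∀ x x' v v', K x x' v v' = H.inner (D x v) (D x' v')) ∧
      DenseIn H (Submodule.span ℂ (⋃ x : X, Set.range (D x)) : Submodule ℂ H.M) :=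
  statement1_general V X smV hV K hsesq hpos
end

section
/- Let A be a C*-algebra, V a right A-module, B a unital C*-algebra, and E : B → S_A(V) a completely positive map. Suppose (M,π,J) and (M',π',J') are two minimal dilations for E, i.e. M and M' are Hilbert C*-modules over A, π : B → L_A(M) and π' : B → L_A(M') are unital *-homomorphisms, J ∈ Lin_A(V,M) and J' ∈ Lin_A(V,M'), such that E(b)(v,v') = ⟨Jv | π(b)Jv'⟩ and E(b)(v,v') = ⟨J'v | π'(b)J'v'⟩ for all b ∈ B, v,v' ∈ V, and the ℂ-linear spans of {π(b)Jv : b ∈ B, v ∈ V} and of {π'(b)J'v : b ∈ B, v ∈ V} are dense in M and in M' respectively. Then there exists a unitary U : M → M' such that π'(b)∘U = U∘π(b) for all b ∈ B and J' = U∘J. -/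
variable (A : Type) [NonUnitalCStarAlgebra A] [PartialOrder A] [StarOrderedRing A]

variable {A}

/-- Complete positivity of a ℂ-linear map `E : B → S_A(V)`: for every positive matrix
`(b_ij) ∈ M_n(B)` and all `v_1,…,v_n ∈ V`, the matrix `(E(b_ij)(v_i,v_j))_{i,j}` is
positive in `M_n(A)`. -/
def CompPos {B V A : Type} [NonUnitalRing B] [StarRing B]
    [AddCommGroup V] [Module ℂ V] [NonUnitalRing A] [StarRing A]
    (E : B → V → V → A) : Prop :=
  ∀ (n : ℕ) (b : Matrix (Fin n) (Fin n) B), AlgPos b →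
    ∀ v : Fin n → V, AlgPos (Matrix.of fun i j => E (b i j) (v i) (v j))

/-- ℂ-linearity of `E : B → S(V;A)`. -/
structure IsLinearSesqValued {B V A : Type} [AddCommGroup B] [Module ℂ B]
    [AddCommGroup V] [Module ℂ V] [AddCommGroup A] [Module ℂ A]
    (E : B → V → V → A) : Prop where
  map_add : ∀ b b' v v', E (b + b') v v' = E b v v' + E b' v v'
  map_smul : ∀ (c : ℂ) b v v', E (c • b) v v' = c • E b v v'

/-- `π b` is adjointable with adjoint `π (star b)`, `π` is ℂ-linear and multiplicative;
this says precisely that `π : B → L_A(M)` is a *-homomorphism into the adjointable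
operators on `M`. -/
structure IsStarHomIntoAdjointables {B : Type} [NonUnitalRing B] [Module ℂ B] [StarRing B]
    (H : HilbertCStarModule A) (π : B → H.M → H.M) : Prop where
  adjoint : ∀ b m m', H.inner (π b m) m' = H.inner m (π (star b) m')
  map_add : ∀ b b' m, π (b + b') m = π b m + π b' m
  map_smul : ∀ (c : ℂ) b m, π (c • b) m = c • π b m
  map_mul : ∀ b b' m, π (b * b') m = π b (π b' m)

/-- A unitary map between Hilbert C*-modules over `A`: a bijective, ℂ-linear and
`A`-linear map preserving inner products. -/
structure IsUnitary (H H' : HilbertCStarModule A) (U : H.M → H'.M) : Prop where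
  bijective : Function.Bijective U
  linA : IsLinAMap H.sm H'.sm U
  inner_map : ∀ m m'', H'.inner (U m) (U m'') = H.inner m m''


/-!
The Gram matrices of the two families of generators `π b (J v)` and `π' b (J' v)` coincide,
both being `(E (b₁* b₂) (v₁, v₂))`. Hence `π b (J v) ↦ π' b (J' v)` extends linearly to the
spans and, being isometric there, by continuity to an inner-product-preserving map `U : M → M'`,
whose range is closed and contains a dense set. Intertwining and `A`-linearity of `U` are
checked against the generators of `M'`, which separate points since their span is dense.
-/

open scoped InnerProductSpace

namespace CStarModule

variable {𝒜 E F : Type*} [NonUnitalCStarAlgebra 𝒜] [PartialOrder 𝒜]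
  [NormedAddCommGroup E] [NormedSpace ℂ E] [SMul 𝒜 E] [CStarModule 𝒜 E]
  [NormedAddCommGroup F] [NormedSpace ℂ F] [SMul 𝒜 F] [CStarModule 𝒜 F]

lemma inner_linearCombination_eq_of_gram_eq {ι : Type*} {g : ι → E} {g' : ι → F}
    (hgram : ∀ i j, ⟪g i, g j⟫_𝒜 = ⟪g' i, g' j⟫_𝒜) (x y : ι →₀ ℂ) :
    ⟪Finsupp.linearCombination ℂ g x, Finsupp.linearCombination ℂ g y⟫_𝒜 =
      ⟪Finsupp.linearCombination ℂ g' x, Finsupp.linearCombination ℂ g' y⟫_𝒜 := by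
  simp [Finsupp.linearCombination_apply, Finsupp.sum, inner_sum_left, inner_sum_right,
    inner_smul_left_complex, hgram]

lemma isometry_of_inner_map {U : E →L[ℂ] F} (hU : ∀ x y, ⟪U x, U y⟫_𝒜 = ⟪x, y⟫_𝒜) :
    Isometry U :=
  AddMonoidHomClass.isometry_of_norm U fun x => by
    rw [norm_eq_sqrt_norm_inner_self (A := 𝒜) (U x), norm_eq_sqrt_norm_inner_self (A := 𝒜) x, hU]

theorem surjective_of_inner_map [CompleteSpace E] {U : E →L[ℂ] F}
    (hU : ∀ x y, ⟪U x, U y⟫_𝒜 = ⟪x, y⟫_𝒜) {s : Set F}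
    (hs : Dense (Submodule.span ℂ s : Set F)) (hsU : s ⊆ Set.range U) :
    Function.Surjective U := by
  have hclosed : IsClosed (Set.range U) :=
    (isometry_of_inner_map hU).isClosedEmbedding.isClosed_range
  have hspan : Submodule.span ℂ s ≤ LinearMap.range (U : E →ₗ[ℂ] F) :=
    Submodule.span_le.mpr (by rwa [LinearMap.coe_range, ContinuousLinearMap.coe_coe])
  intro y
  have hy :=
    closure_mono (t := Set.range U) (fun z hz => LinearMap.mem_range.mp (hspan hz)) (hs y)
  rwa [hclosed.closure_eq] at hy

variable [StarOrderedRing 𝒜]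

theorem exists_inner_map_of_gram_eq [CompleteSpace F] {ι : Type*} {g : ι → E} {g' : ι → F}
    (hgram : ∀ i j, ⟪g i, g j⟫_𝒜 = ⟪g' i, g' j⟫_𝒜)
    (hg : Dense (Submodule.span ℂ (Set.range g) : Set E)) :
    ∃ U : E →L[ℂ] F, (∀ x y, ⟪U x, U y⟫_𝒜 = ⟪x, y⟫_𝒜) ∧ ∀ i, U (g i) = g' i := by
  set L := Finsupp.linearCombination ℂ g
  set L' := Finsupp.linearCombination ℂ g'
  have hL : DenseRange L := by
    rwa [DenseRange, ← LinearMap.coe_range, Finsupp.range_linearCombination]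
  have hnorm : ∃ C, ∀ x, ‖L' x‖ ≤ C * ‖L x‖ := ⟨1, fun x => by
    rw [one_mul, norm_eq_sqrt_norm_inner_self (A := 𝒜) (L' x),
      norm_eq_sqrt_norm_inner_self (A := 𝒜) (L x), inner_linearCombination_eq_of_gram_eq hgram]⟩
  have hUL : ∀ x, L'.extendOfNorm L (L x) = L' x := LinearMap.extendOfNorm_eq hL hnorm
  refine ⟨L'.extendOfNorm L, fun x y => ?_, fun i => ?_⟩
  · refine hL.induction_on₂ (p := fun x y => ⟪L'.extendOfNorm L x, L'.extendOfNorm L y⟫_𝒜 =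
      ⟪x, y⟫_𝒜) (isClosed_eq (by fun_prop) continuous_inner) (fun x y => ?_) x y
    rw [hUL, hUL, inner_linearCombination_eq_of_gram_eq hgram]
  · simpa [L, L'] using hUL (Finsupp.single i 1)

lemma eq_of_inner_eq_of_dense_span {s : Set E} (hs : Dense (Submodule.span ℂ s : Set E))
    {x x' : E} (h : ∀ y ∈ s, ⟪x, y⟫_𝒜 = ⟪x', y⟫_𝒜) : x = x' := by
  have hzero : (innerSL (x - x') : E →L[ℂ] 𝒜) = 0 :=
    ContinuousLinearMap.ext_on hs fun y hy => by simp [innerSL_apply, h y hy]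
  have hself := congrArg (· (x - x')) hzero
  rw [zero_apply, innerSL_apply, inner_self] at hself
  exact sub_eq_zero.mp hself

end CStarModule

namespace HilbertCStarModule

variable {A : Type} [NonUnitalCStarAlgebra A] [PartialOrder A] (H : HilbertCStarModule A)

instance : SMul Aᵐᵒᵖ H.M := ⟨fun a m => H.sm m a.unop⟩

noncomputable instance : Norm H.M := ⟨fun m => √‖H.inner m m‖⟩

lemma inner_zero_right (m : H.M) : H.inner m 0 = 0 := by
  simpa using H.inner_add_right m 0 0

/-- A right Hilbert `A`-module is a (left) C⋆-module over `Aᵐᵒᵖ` in Mathlib's sense. -/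
noncomputable instance : CStarModule Aᵐᵒᵖ H.M where
  inner x y := MulOpposite.op (H.inner x y)
  inner_add_right {x y z} := by simp [H.inner_add_right]
  inner_self_nonneg {x} := H.inner_nonneg x
  inner_self {x} := ⟨fun h => H.inner_definite x (MulOpposite.op_eq_zero_iff _ |>.mp h),
    fun h => by simp [h, inner_zero_right]⟩
  inner_op_smul_right {a x y} := by
    change MulOpposite.op (H.inner x (H.sm y a.unop)) = _
    simp [H.inner_sm_right]
  inner_smul_right_complex {z x y} := by
    simp [H.inner_smul_right]
  star_inner x y := by
    change star (MulOpposite.op (H.inner x y)) = MulOpposite.op (H.inner y x)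
    rw [← MulOpposite.op_star, ← H.inner_conj]
  norm_eq_sqrt_norm_inner_self _ := rfl

variable {H}

lemma norm_lt_iff (m : H.M) {ε : ℝ} (hε : 0 < ε) : ‖m‖ < ε ↔ ‖H.inner m m‖ < ε ^ 2 :=
  Real.sqrt_lt' hε

lemma inner_sm_left (m m' : H.M) (a : A) : H.inner (H.sm m a) m' = star a * H.inner m m' := by
  rw [H.inner_conj, H.inner_sm_right, star_mul, ← H.inner_conj]

variable (H) [StarOrderedRing A]

noncomputable instance : NormedAddCommGroup H.M :=
  NormedAddCommGroup.ofCore (CStarModule.normedSpaceCore Aᵐᵒᵖ)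

noncomputable instance : NormedSpace ℂ H.M :=
  NormedSpace.ofCore (CStarModule.normedSpaceCore Aᵐᵒᵖ)

instance : CompleteSpace H.M := by
  refine Metric.complete_of_cauchySeq_tendsto fun u hu => ?_
  have hcauchy : ∀ ε : ℝ, 0 < ε → ∃ N, ∀ j ≥ N, ∀ k ≥ N,
      ‖H.inner (u j - u k) (u j - u k)‖ < ε := fun ε hε => by
    obtain ⟨N, hN⟩ := Metric.cauchySeq_iff.mp hu √ε (Real.sqrt_pos.mpr hε)
    refine ⟨N, fun j hj k hk => ?_⟩
    have h := (norm_lt_iff _ (Real.sqrt_pos.mpr hε)).mp (dist_eq_norm (u j) (u k) ▸ hN j hj k hk)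
    rwa [Real.sq_sqrt hε.le] at h
  obtain ⟨m, hm⟩ := H.complete u hcauchy
  refine ⟨m, Metric.tendsto_atTop.mpr fun ε hε => ?_⟩
  obtain ⟨N, hN⟩ := hm (ε ^ 2) (by positivity)
  exact ⟨N, fun k hk => by rw [dist_eq_norm]; exact (norm_lt_iff _ hε).mpr (hN k hk)⟩

variable {H}

lemma _root_.DenseIn.dense {S : Set H.M} (h : DenseIn H S) : Dense S := fun m =>
  Metric.mem_closure_iff.mpr fun ε hε => by
    obtain ⟨w, hw, hlt⟩ := h m (ε ^ 2) (by positivity)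
    exact ⟨w, hw, by rw [dist_eq_norm]; exact (norm_lt_iff _ hε).mpr hlt⟩

lemma eq_of_inner_eq {s : Set H.M} (hs : DenseIn H (Submodule.span ℂ s : Set H.M))
    {x x' : H.M} (h : ∀ y ∈ s, H.inner x y = H.inner x' y) : x = x' :=
  CStarModule.eq_of_inner_eq_of_dense_span (𝒜 := Aᵐᵒᵖ) hs.dense fun y hy =>
    congrArg MulOpposite.op (h y hy)

end HilbertCStarModule

lemma IsStarHomIntoAdjointables.inner_apply_apply {A B : Type} [NonUnitalCStarAlgebra A]
    [PartialOrder A] [NonUnitalRing B] [Module ℂ B] [StarRing B]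
    {H : HilbertCStarModule A} {π : B → H.M → H.M} (hπ : IsStarHomIntoAdjointables H π)
    (b c : B) (m m' : H.M) : H.inner (π b m) (π c m') = H.inner m (π (star b * c) m') := by
  rw [hπ.adjoint, hπ.map_mul]

open HilbertCStarModule

theorem statement5_general (B V : Type) [CStarAlgebra B]
    [AddCommGroup V] [Module ℂ V]
    (E : B → V → V → A)
    (H H' : HilbertCStarModule A)
    (π : B → H.M → H.M) (π' : B → H'.M → H'.M) (J : V → H.M) (J' : V → H'.M)
    (hπ : IsStarHomIntoAdjointables H π) (hπ' : IsStarHomIntoAdjointables H' π')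
    (hπ1 : ∀ m, π 1 m = m) (hπ'1 : ∀ m, π' 1 m = m)
    (hE : ∀ b v v', E b v v' = H.inner (J v) (π b (J v')))
    (hE' : ∀ b v v', E b v v' = H'.inner (J' v) (π' b (J' v')))
    (hdense : DenseIn H (Submodule.span ℂ {m : H.M | ∃ b v, m = π b (J v)} : Submodule ℂ H.M))
    (hdense' :
      DenseIn H' (Submodule.span ℂ {m : H'.M | ∃ b v, m = π' b (J' v)} : Submodule ℂ H'.M)) :
    ∃ U : H.M → H'.M, IsUnitary H H' U ∧
      (∀ b m, π' b (U m) = U (π b m)) ∧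
      (∀ v, J' v = U (J v)) := by
  have hrange : {m : H.M | ∃ b v, m = π b (J v)} = Set.range fun p : B × V => π p.1 (J p.2) := by
    ext; simp [eq_comm]
  have hgram : ∀ p q : B × V, H.inner (π p.1 (J p.2)) (π q.1 (J q.2)) =
      H'.inner (π' p.1 (J' p.2)) (π' q.1 (J' q.2)) := fun p q => by
    rw [hπ.inner_apply_apply, hπ'.inner_apply_apply, ← hE, ← hE']
  obtain ⟨U, hUinner, hUgen⟩ := CStarModule.exists_inner_map_of_gram_eq (𝒜 := Aᵐᵒᵖ)
    (g := fun p : B × V => π p.1 (J p.2)) (g' := fun p : B × V => π' p.1 (J' p.2))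
    (fun p q => congrArg MulOpposite.op (hgram p q)) (hrange ▸ hdense.dense)
  replace hUgen : ∀ b v, U (π b (J v)) = π' b (J' v) := fun b v => hUgen (b, v)
  have hUinner' : ∀ m m', H'.inner (U m) (U m') = H.inner m m' := fun m m' =>
    congrArg MulOpposite.unop (hUinner m m')
  have hsurj : Function.Surjective U := CStarModule.surjective_of_inner_map hUinner
    hdense'.dense (by rintro _ ⟨b, v, rfl⟩; exact ⟨_, hUgen b v⟩)
  have hsm : ∀ m a, U (H.sm m a) = H'.sm (U m) a := fun m a => by
    refine H'.eq_of_inner_eq hdense' ?_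
    rintro _ ⟨c, v, rfl⟩
    rw [← hUgen c v, hUinner', inner_sm_left, inner_sm_left, hUinner']
  have hintertwine : ∀ b m, π' b (U m) = U (π b m) := fun b m => by
    refine H'.eq_of_inner_eq hdense' ?_
    rintro _ ⟨c, v, rfl⟩
    rw [hπ'.inner_apply_apply, ← hUgen (star b * c) v, hUinner', ← hπ.inner_apply_apply,
      ← hUgen c v, hUinner']
  refine ⟨U, ⟨⟨(CStarModule.isometry_of_inner_map hUinner).injective, hsurj⟩,
    ⟨map_add U, map_smul U, hsm⟩, hUinner'⟩, hintertwine, fun v => ?_⟩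
  rw [← hπ'1 (J' v), ← hUgen, hπ1]

/-- Uniqueness (up to a unitary) of minimal dilations of a completely positive map
`E : B → S_A(V)` for a unital C*-algebra `B`. -/
theorem statement5 (B V : Type) [CStarAlgebra B]
    [AddCommGroup V] [Module ℂ V]
    (smV : V → A → V) (hV : IsRightModule A smV)
    (E : B → V → V → A) (hlin : IsLinearSesqValued E)
    (hsesq : ∀ b, IsASesq smV (E b)) (hcp : CompPos E)
    (H H' : HilbertCStarModule A)
    (π : B → H.M → H.M) (π' : B → H'.M → H'.M) (J : V → H.M) (J' : V → H'.M)
    (hπ : IsStarHomIntoAdjointables H π) (hπ' : IsStarHomIntoAdjointables H' π')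
    (hπ1 : ∀ m, π 1 m = m) (hπ'1 : ∀ m, π' 1 m = m)
    (hJ : IsLinAMap smV H.sm J) (hJ' : IsLinAMap smV H'.sm J')
    (hE : ∀ b v v', E b v v' = H.inner (J v) (π b (J v')))
    (hE' : ∀ b v v', E b v v' = H'.inner (J' v) (π' b (J' v')))
    (hdense : DenseIn H (Submodule.span ℂ {m : H.M | ∃ b v, m = π b (J v)} : Submodule ℂ H.M))
    (hdense' :
      DenseIn H' (Submodule.span ℂ {m : H'.M | ∃ b v, m = π' b (J' v)} : Submodule ℂ H'.M)) :
    ∃ U : H.M → H'.M, IsUnitary H H' U ∧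
      (∀ b m, π' b (U m) = U (π b m)) ∧
      (∀ v, J' v = U (J v)) :=
  statement5_general B V E H H' π π' J J' hπ hπ' hπ1 hπ'1 hE hE' hdense hdense'
end
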